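/- Let n ≥ 1 and let λ, λ' ∈ ℚ^n be decreasing tuples with Σ_i λ_i = Σ_i λ'_i, both satisfying the following integrality condition: for every index 1 ≤ j ≤ n with j = n or λ_j > λ_{j+1}, the partial sum λ_1 + … + λ_j is an integer (and likewise for λ'). If λ ≠ λ', then Σ_{i : λ_i > λ'_i} (λ_i − λ'_i) ≥ 1/n. (In particular, any two distinct Newton points of GL_n are at distance at least 1/n, since the vertices of a Newton polygon are lattice points.) -/
import Mathlib


/-!
Statement 8.  Let `λ, λ' ∈ ℚ^n` be decreasing tuples with equal sums, both
satisfying the integrality condition: at every index `j` which is the last one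
or where `λ_j > λ_{j+1}`, the partial sum `λ_1 + … + λ_j` is an integer.
If `λ ≠ λ'` then `Σ_{i : λᵢ > λ'ᵢ} (λᵢ − λ'ᵢ) ≥ 1/n`.
-/

noncomputable section

/-- The vertex condition of the Newton polygon at index `j` (0-indexed):
`j` is the last index, or the slope drops after `j`. -/
def IsBreak {n : ℕ} (lam : Fin n → ℚ) (j : Fin n) : Prop :=
  (j : ℕ) + 1 = n ∨ ∃ hlt : (j : ℕ) + 1 < n, lam ⟨(j : ℕ) + 1, hlt⟩ < lam j

/-- The partial sum `λ_0 + … + λ_j`. -/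
def partialSum {n : ℕ} (lam : Fin n → ℚ) (j : Fin n) : ℚ :=
  ∑ i : Fin n, if (i : ℕ) ≤ (j : ℕ) then lam i else 0

namespace St8

/-- Extension of `lam` to `ℕ` by zero. -/
def ext {n : ℕ} (lam : Fin n → ℚ) (i : ℕ) : ℚ := if h : i < n then lam ⟨i, h⟩ else 0

/-- Partial sum, `ℕ`-indexed: sum of the first `k` entries. -/
def P {n : ℕ} (lam : Fin n → ℚ) (k : ℕ) : ℚ := ∑ i ∈ Finset.range k, ext lam i

lemma ext_eq {n : ℕ} (lam : Fin n → ℚ) {i : ℕ} (h : i < n) : ext lam i = lam ⟨i, h⟩ :=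
  dif_pos h

lemma P_succ {n : ℕ} (lam : Fin n → ℚ) (k : ℕ) : P lam (k + 1) = P lam k + ext lam k :=
  Finset.sum_range_succ _ _

lemma partialSum_eq {n : ℕ} (lam : Fin n → ℚ) (j : Fin n) :
    partialSum lam j = P lam ((j : ℕ) + 1) := by
  have h0 : ∀ i : Fin n, (if (i : ℕ) ≤ (j : ℕ) then lam i else 0)
      = (fun m : ℕ => if m ≤ (j : ℕ) then ext lam m else 0) (i : ℕ) := by
    intro i
    by_cases h : (i : ℕ) ≤ (j : ℕ) <;> simp [h, ext_eq lam i.isLt]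
  have h1 : partialSum lam j = ∑ i ∈ Finset.range n, (if i ≤ (j : ℕ) then ext lam i else 0) := by
    rw [partialSum, Finset.sum_congr rfl (fun i _ => h0 i)]
    exact Fin.sum_univ_eq_sum_range (fun m : ℕ => if m ≤ (j : ℕ) then ext lam m else 0) n
  rw [h1, ← Finset.sum_filter]
  have h2 : (Finset.range n).filter (· ≤ (j : ℕ)) = Finset.range ((j : ℕ) + 1) := by
    ext i
    simp only [Finset.mem_filter, Finset.mem_range]
    have := j.isLt
    omega
  rw [h2, P]

lemma P_n {n : ℕ} (lam : Fin n → ℚ) : P lam n = ∑ i, lam i := by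
  have h0 : ∀ i : Fin n, lam i = (fun m : ℕ => ext lam m) (i : ℕ) := by
    intro i; simp [ext_eq lam i.isLt]
  rw [P, show (∑ i, lam i) = ∑ i : Fin n, (fun m : ℕ => ext lam m) (i : ℕ) from
    Finset.sum_congr rfl (fun i _ => h0 i)]
  exact (Fin.sum_univ_eq_sum_range (fun m : ℕ => ext lam m) n).symm

/-- Vertex integrality for `P`. -/
lemma P_int {n : ℕ} (lam : Fin n → ℚ)
    (hint : ∀ j : Fin n, IsBreak lam j → ∃ z : ℤ, partialSum lam j = z)
    (k : ℕ) (hk1 : 1 ≤ k) (hkn : k ≤ n)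
    (hbr : k = n ∨ ext lam k < ext lam (k - 1)) :
    ∃ z : ℤ, P lam k = z := by
  have hk1n : k - 1 < n := by omega
  set j : Fin n := ⟨k - 1, hk1n⟩ with hj
  have hjk : (j : ℕ) + 1 = k := by simp [hj]; omega
  have hbreak : IsBreak lam j := by
    by_cases hkn' : k = n
    · left; omega
    · right
      have hkn'' : k < n := by omega
      have h : ext lam k < ext lam (k - 1) := by tauto
      refine ⟨by omega, ?_⟩
      rw [ext_eq lam hkn'', ext_eq lam hk1n] at h
      have heq : (⟨(j : ℕ) + 1, by omega⟩ : Fin n) = ⟨k, hkn''⟩ := Fin.ext hjk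
      rw [heq]
      exact h
  obtain ⟨z, hz⟩ := hint j hbreak
  exact ⟨z, by rw [← hjk, ← partialSum_eq, hz]⟩

/-- The distance dominates differences of partial sums. -/
lemma P_le_dist {n : ℕ} (lam lam' : Fin n → ℚ) (k : ℕ) (hk : k ≤ n) :
    P lam k - P lam' k ≤ ∑ i, max (lam i - lam' i) 0 := by
  have h1 : P lam k - P lam' k = ∑ i ∈ Finset.range k, (ext lam i - ext lam' i) := by
    rw [P, P, Finset.sum_sub_distrib]
  have h2 : ∑ i ∈ Finset.range k, (ext lam i - ext lam' i)
      ≤ ∑ i ∈ Finset.range k, max (ext lam i - ext lam' i) 0 :=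
    Finset.sum_le_sum fun i _ => le_max_left _ _
  have h3 : ∑ i ∈ Finset.range k, max (ext lam i - ext lam' i) 0
      ≤ ∑ i ∈ Finset.range n, max (ext lam i - ext lam' i) 0 :=
    Finset.sum_le_sum_of_subset_of_nonneg (Finset.range_subset_range.2 hk)
      (fun i _ _ => le_max_right _ _)
  have h4 : ∑ i ∈ Finset.range n, max (ext lam i - ext lam' i) 0
      = ∑ i, max (lam i - lam' i) 0 := by
    have h0 : ∀ i : Fin n, max (lam i - lam' i) 0
        = (fun m : ℕ => max (ext lam m - ext lam' m) 0) (i : ℕ) := by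
      intro i; simp [ext_eq lam i.isLt, ext_eq lam' i.isLt]
    rw [show (∑ i, max (lam i - lam' i) 0)
        = ∑ i : Fin n, (fun m : ℕ => max (ext lam m - ext lam' m) 0) (i : ℕ) from
      Finset.sum_congr rfl (fun i _ => h0 i)]
    exact (Fin.sum_univ_eq_sum_range (fun m : ℕ => max (ext lam m - ext lam' m) 0) n).symm
  linarith

/-- Symmetry of the distance for equal-sum tuples. -/
lemma dist_symm {n : ℕ} (lam lam' : Fin n → ℚ) (hsum : ∑ i, lam i = ∑ i, lam' i) :
    ∑ i, max (lam i - lam' i) 0 = ∑ i, max (lam' i - lam i) 0 := by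
  have key : ∀ x : ℚ, max x 0 - max (-x) 0 = x := by
    intro x
    rcases le_total x 0 with h | h
    · rw [max_eq_right h, max_eq_left (by linarith)]; ring
    · rw [max_eq_left h, max_eq_right (by linarith)]; ring
  have h1 : ∑ i, (max (lam i - lam' i) 0 - max (lam' i - lam i) 0) = ∑ i, (lam i - lam' i) := by
    apply Finset.sum_congr rfl
    intro i _
    have := key (lam i - lam' i)
    rw [show lam' i - lam i = -(lam i - lam' i) by ring]
    exact this
  rw [Finset.sum_sub_distrib] at h1
  rw [Finset.sum_sub_distrib] at h1
  linarith [h1, hsum]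

/-- Vertex predicate on `ℕ` index `k ∈ [0,n]` for the polygon of `lam`. -/
def Vp {n : ℕ} (lam : Fin n → ℚ) (k : ℕ) : Prop :=
  k = 0 ∨ k = n ∨ (0 < k ∧ k < n ∧ ext lam k < ext lam (k - 1))

lemma Vp_int {n : ℕ} (hn : 1 ≤ n) (lam : Fin n → ℚ)
    (hint : ∀ j : Fin n, IsBreak lam j → ∃ z : ℤ, partialSum lam j = z)
    (k : ℕ) (hVp : Vp lam k) : ∃ z : ℤ, P lam k = z := by
  rcases hVp with h | h | h
  · exact ⟨0, by simp [h, P]⟩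
  · obtain ⟨z, hz⟩ := P_int lam hint n hn le_rfl (Or.inl rfl)
    exact ⟨z, by rw [h, hz]⟩
  · exact P_int lam hint k h.1 (le_of_lt h.2.1) (Or.inr h.2.2)

/-- Main lemma: if some partial sum of `lam` strictly exceeds that of `lam'`. -/
lemma main {n : ℕ} (hn : 1 ≤ n) (lam lam' : Fin n → ℚ)
    (hlam' : Antitone lam')
    (hsum : ∑ i, lam i = ∑ i, lam' i)
    (hint : ∀ j : Fin n, IsBreak lam j → ∃ z : ℤ, partialSum lam j = z)
    (hint' : ∀ j : Fin n, IsBreak lam' j → ∃ z : ℤ, partialSum lam' j = z)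
    (k0 : ℕ) (hk0 : k0 ≤ n) (hpos : P lam' k0 < P lam k0) :
    1 / (n : ℚ) ≤ ∑ i, max (lam i - lam' i) 0 := by
  classical
  set D : ℕ → ℚ := fun k => P lam k - P lam' k with hD
  -- pick the largest maximizer j of D on [0, n]
  obtain ⟨j0, hj0mem, hj0max⟩ :=
    Finset.exists_max_image (Finset.range (n + 1)) D ⟨0, by simp⟩
  have hj0n : j0 ≤ n := by
    have := Finset.mem_range.1 hj0mem; omega
  set j := Nat.findGreatest (fun k => D j0 ≤ D k) n with hjdef
  have hjn : j ≤ n := Nat.findGreatest_le (P := fun k => D j0 ≤ D k) n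
  have hspec : D j0 ≤ D j := Nat.findGreatest_spec (P := fun k => D j0 ≤ D k) hj0n (le_refl (D j0))
  have hjmax : ∀ m, m ≤ n → D m ≤ D j := fun m hm =>
    le_trans (hj0max m (Finset.mem_range.2 (by omega))) hspec
  have hgreatest : ∀ k, j < k → k ≤ n → D k < D j := by
    intro k hjk hkn
    have h1 : ¬ (D j0 ≤ D k) := Nat.findGreatest_is_greatest (P := fun k => D j0 ≤ D k) hjk hkn
    have h2 : D k ≤ D j0 := hj0max k (Finset.mem_range.2 (by omega))
    push_neg at h1
    linarith
  have hDj_pos : 0 < D j := by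
    have := hjmax k0 hk0
    simp only [hD] at this ⊢
    linarith
  have hD0 : D 0 = 0 := by simp [hD, P]
  have hDn : D n = 0 := by simp [hD, P_n, hsum]
  have hj1 : 1 ≤ j := by
    rcases Nat.eq_zero_or_pos j with h | h
    · rw [h] at hDj_pos; rw [hD0] at hDj_pos; exact absurd hDj_pos (lt_irrefl 0)
    · exact h
  have hjltn : j < n := by
    rcases lt_or_eq_of_le hjn with h | h
    · exact h
    · rw [h] at hDj_pos; rw [hDn] at hDj_pos; exact absurd hDj_pos (lt_irrefl 0)
  -- D (j+1) < D j  (j is the largest maximizer)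
  have hDj1 : D (j + 1) < D j := hgreatest (j + 1) (by omega) (by omega)
  have hDjm : D (j - 1) ≤ D j := hjmax (j - 1) (by omega)
  -- slopes
  have hstep : ∀ k, D (k + 1) = D k + (ext lam k - ext lam' k) := by
    intro k; simp only [hD, P_succ]; ring
  have hslope1 : ext lam j < ext lam' j := by
    have := hstep j; rw [this] at hDj1; linarith
  have hslope0 : ext lam' (j - 1) ≤ ext lam (j - 1) := by
    have h := hstep (j - 1)
    rw [show j - 1 + 1 = j by omega] at h
    rw [h] at hDjm
    linarith
  have hanti : ext lam' j ≤ ext lam' (j - 1) := by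
    rw [ext_eq lam' hjltn, ext_eq lam' (show j - 1 < n by omega)]
    exact hlam' (Fin.mk_le_mk.2 (by omega))
  -- j is a break of lam, so P lam j is an integer
  obtain ⟨z1, hz1⟩ : ∃ z : ℤ, P lam j = z := by
    apply P_int lam hint j hj1 hjn
    right
    calc ext lam j < ext lam' j := hslope1
      _ ≤ ext lam' (j - 1) := hanti
      _ ≤ ext lam (j - 1) := hslope0
  -- bracketing vertices of lam'
  have hVp0 : Vp lam' 0 := Or.inl rfl
  have hVpn : Vp lam' n := Or.inr (Or.inl rfl)
  set a := Nat.findGreatest (Vp lam') j with hadef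
  have haj : a ≤ j := Nat.findGreatest_le j
  have hVpa : Vp lam' a := Nat.findGreatest_spec (Nat.zero_le j) hVp0
  have hnoVp_left : ∀ k, a < k → k ≤ j → ¬ Vp lam' k := fun k hak hkj =>
    Nat.findGreatest_is_greatest hak hkj
  have hbex : ∃ k, j ≤ k ∧ Vp lam' k := ⟨n, hjn, hVpn⟩
  set b := Nat.find hbex with hbdef
  have hjb : j ≤ b := (Nat.find_spec hbex).1
  have hVpb : Vp lam' b := (Nat.find_spec hbex).2
  have hbn : b ≤ n := Nat.find_le ⟨hjn, hVpn⟩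
  have hnoVp_right : ∀ k, j ≤ k → k < b → ¬ Vp lam' k := by
    intro k hjk hkb hVpk
    exact (Nat.find_min hbex hkb) ⟨hjk, hVpk⟩
  have hnoVp : ∀ k, a < k → k < b → ¬ Vp lam' k := by
    intro k hak hkb
    rcases le_or_gt k j with h | h
    · exact hnoVp_left k hak h
    · exact hnoVp_right k (le_of_lt h) hkb
  -- constancy of the slope of lam' on [a, b)
  have hconst : ∀ k, a ≤ k → k < b → ext lam' k = ext lam' a := by
    intro k
    induction k with
    | zero => intro h _; rw [Nat.le_zero.1 h]
    | succ k ih =>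
      intro hak hkb
      rcases lt_or_eq_of_le hak with h | h
      · have hak' : a ≤ k := by omega
        have hnv := hnoVp (k + 1) h hkb
        have hk1n : k + 1 < n := by omega
        have hle : ext lam' (k + 1) ≤ ext lam' k := by
          rw [ext_eq lam' hk1n, ext_eq lam' (show k < n by omega)]
          exact hlam' (Fin.mk_le_mk.2 (by omega))
        have heq : ext lam' (k + 1) = ext lam' k := by
          rcases lt_or_eq_of_le hle with h2 | h2
          · exfalso
            exact hnv (Or.inr (Or.inr ⟨by omega, hk1n, by simpa using h2⟩))
          · exact h2
        rw [heq, ih hak' (by omega)]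
      · rw [← h]
  -- linear formula for P lam' on [a, b]
  have hPlin : ∀ k, a ≤ k → k ≤ b → P lam' k = P lam' a + ((k - a : ℕ) : ℚ) * ext lam' a := by
    intro k
    induction k with
    | zero => intro h _; rw [Nat.le_zero.1 h]; simp
    | succ k ih =>
      intro hak hkb
      rcases lt_or_eq_of_le hak with h | h
      · have hak' : a ≤ k := by omega
        rw [P_succ, ih hak' (by omega), hconst k hak' (by omega)]
        have : ((k + 1 - a : ℕ) : ℚ) = ((k - a : ℕ) : ℚ) + 1 := by
          have h3 : k + 1 - a = (k - a) + 1 := by omega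
          rw [h3]; push_cast; ring
        rw [this]; ring
      · rw [← h]; simp
  -- integrality of (b-a) * P lam' j
  obtain ⟨za, hza⟩ := Vp_int hn lam' hint' a hVpa
  obtain ⟨zb, hzb⟩ := Vp_int hn lam' hint' b hVpb
  have hab : a < b ∨ a = j := by
    rcases lt_or_eq_of_le haj with h | h
    · left
      rcases lt_or_eq_of_le hjb with h2 | h2
      · omega
      · exfalso; exact hnoVp_left j h le_rfl (h2 ▸ hVpb)
    · right; exact h
  obtain ⟨N, hN1, hNn, w, hw⟩ :
      ∃ N : ℕ, 1 ≤ N ∧ N ≤ n ∧ ∃ w : ℤ, (N : ℚ) * P lam' j = (w : ℚ) := by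
    rcases hab with h | h
    · refine ⟨b - a, by omega, by omega, ?_⟩
      have hPj := hPlin j haj hjb
      have hPb := hPlin b (le_of_lt h) le_rfl
      rw [hza] at hPj hPb
      rw [hzb] at hPb
      -- (b-a) * ext lam' a = zb - za
      have hc : ((b - a : ℕ) : ℚ) * ext lam' a = (zb : ℚ) - (za : ℚ) := by
        rw [hPb]; ring
      refine ⟨(b - a : ℕ) * za + (j - a : ℕ) * (zb - za), ?_⟩
      rw [hPj]
      push_cast
      calc ((b - a : ℕ) : ℚ) * ((za : ℚ) + ((j - a : ℕ) : ℚ) * ext lam' a)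
          = ((b - a : ℕ) : ℚ) * (za : ℚ)
            + ((j - a : ℕ) : ℚ) * (((b - a : ℕ) : ℚ) * ext lam' a) := by ring
        _ = ((b - a : ℕ) : ℚ) * (za : ℚ) + ((j - a : ℕ) : ℚ) * ((zb : ℚ) - (za : ℚ)) := by
            rw [hc]
    · refine ⟨1, le_rfl, hn, za, ?_⟩
      rw [← h, hza]; push_cast; ring
  -- conclude
  have hNpos : (0 : ℚ) < N := by exact_mod_cast hN1
  have hu : ((N : ℤ) * z1 - w : ℤ) = (N : ℚ) * D j := by
    push_cast
    simp only [hD]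
    rw [hz1]
    rw [mul_sub, hw]
  have hu_pos : (0 : ℚ) < ((N : ℤ) * z1 - w : ℤ) := by
    rw [hu]
    positivity
  have hu1 : (1 : ℤ) ≤ (N : ℤ) * z1 - w := by exact_mod_cast hu_pos
  have hND : (1 : ℚ) ≤ (N : ℚ) * D j := by
    rw [← hu]; exact_mod_cast hu1
  have hDj_ge : 1 / (N : ℚ) ≤ D j := by
    rw [div_le_iff₀ hNpos]; linarith [hND]
  have hfrac : 1 / (n : ℚ) ≤ 1 / (N : ℚ) := by
    apply one_div_le_one_div_of_le hNpos
    exact_mod_cast hNn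
  have hdist := P_le_dist lam lam' j hjn
  simp only [hD] at hDj_ge
  linarith

end St8

theorem statement_8 (n : ℕ) (hn : 1 ≤ n) (lam lam' : Fin n → ℚ)
    (hlam : Antitone lam) (hlam' : Antitone lam')
    (hsum : ∑ i, lam i = ∑ i, lam' i)
    (hint : ∀ j : Fin n, IsBreak lam j → ∃ z : ℤ, partialSum lam j = z)
    (hint' : ∀ j : Fin n, IsBreak lam' j → ∃ z : ℤ, partialSum lam' j = z)
    (hne : lam ≠ lam') :
    1 / (n : ℚ) ≤ ∑ i, max (lam i - lam' i) 0 := by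
  have hPdiff : ∃ k, k ≤ n ∧ St8.P lam k ≠ St8.P lam' k := by
    by_contra h
    push_neg at h
    apply hne
    funext i
    have h1 := h ((i : ℕ) + 1) (by have := i.isLt; omega)
    have h2 := h (i : ℕ) (le_of_lt i.isLt)
    have e1 : St8.P lam ((i : ℕ) + 1) = St8.P lam (i : ℕ) + lam i := by
      rw [St8.P_succ, St8.ext_eq lam i.isLt, Fin.eta]
    have e2 : St8.P lam' ((i : ℕ) + 1) = St8.P lam' (i : ℕ) + lam' i := by
      rw [St8.P_succ, St8.ext_eq lam' i.isLt, Fin.eta]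
    rw [e1, e2, h2] at h1
    linarith
  obtain ⟨k, hkn, hk⟩ := hPdiff
  rcases lt_or_gt_of_ne hk with h | h
  · rw [St8.dist_symm lam lam' hsum]
    exact St8.main hn lam' lam hlam hsum.symm hint' hint k hkn h
  · exact St8.main hn lam lam' hlam' hsum hint hint' k hkn h

end
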